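/- Let X be a complex Banach space which is M-embedded. Then X has the unique extension property: the only contractive linear operator T on X** satisfying T(i_X(x)) = i_X(x) for all x ∈ X is the identity operator on X**. -/

import Mathlib

open NormedSpace

noncomputable section

set_option maxHeartbeats 1000000

instance strongDualSeminormedAddCommGroupC {E : Type*} [SeminormedAddCommGroup E]
    [NormedSpace ℂ E] : SeminormedAddCommGroup (StrongDual ℂ E) :=
  ContinuousLinearMap.toSeminormedAddCommGroup

instance strongDualNormedSpaceC {E : Type*} [SeminormedAddCommGroup E]
    [NormedSpace ℂ E] : NormedSpace ℂ (StrongDual ℂ E) :=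
  ContinuousLinearMap.toNormedSpace

/-- The transpose (dual map) of a continuous linear map between (semi)normed spaces:
`ctranspose f` sends a functional `g` to `g ∘ f`. -/
def ctranspose {E F : Type*} [SeminormedAddCommGroup E] [NormedSpace ℂ E]
    [SeminormedAddCommGroup F] [NormedSpace ℂ F] (f : E →L[ℂ] F) :
    StrongDual ℂ F →L[ℂ] StrongDual ℂ E :=
  (ContinuousLinearMap.compL ℂ E F ℂ).flip f

/-- A bounded linear projection `P` is an L-projection if `‖z‖ = ‖P z‖ + ‖z - P z‖`
for all `z`. -/
def IsLProjection {Z : Type*} [SeminormedAddCommGroup Z] [NormedSpace ℂ Z]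
    (P : Z →L[ℂ] Z) : Prop :=
  (∀ z, P (P z) = P z) ∧ ∀ z, ‖z‖ = ‖P z‖ + ‖z - P z‖

/-- A complex Banach space `X` is M-embedded if the annihilator `i_X(X)^⊥` is an
L-summand in `X***`. -/
def MEmbedded (X : Type*) [SeminormedAddCommGroup X] [NormedSpace ℂ X] : Prop :=
  ∃ P : StrongDual ℂ (StrongDual ℂ (StrongDual ℂ X)) →L[ℂ] StrongDual ℂ (StrongDual ℂ (StrongDual ℂ X)),
    IsLProjection (Z := StrongDual ℂ (StrongDual ℂ (StrongDual ℂ X))) P ∧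
    Set.range P = {φ : StrongDual ℂ (StrongDual ℂ (StrongDual ℂ X)) |
      ∀ x : X, φ (inclusionInDoubleDual ℂ X x) = 0}

/-!
Let `P` be the L-projection of `X***` onto `X^⊥`. A functional `f ∈ X*`, viewed in `X***`, has
the same norm as its restriction to `X`, and that restriction is unchanged by subtracting
`P f`; the L-decomposition `‖f‖ = ‖P f‖ + ‖f - P f‖` then forces `P f = 0`. For a contraction
`T` of `X**` fixing `X`, the functional `T* f` differs from `f` by an element of `X^⊥`, so
`P (T* f) = T* f - f` and `‖T* f‖ = ‖T* f - f‖ + ‖f‖`; since `‖T* f‖ ≤ ‖f‖` this gives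
`T* f = f`. Thus `(T ξ) f = ξ f` for all `ξ ∈ X**` and `f ∈ X*`, i.e. `T = id`.
-/

namespace IsLProjection

variable {Z : Type*} [SeminormedAddCommGroup Z] [NormedSpace ℂ Z] [T0Space Z] {P : Z →L[ℂ] Z}

omit [T0Space Z] in
theorem apply_of_mem_range (hP : IsLProjection P) {z : Z} (hz : z ∈ Set.range P) : P z = z := by
  obtain ⟨w, rfl⟩ := hz
  exact hP.1 w

theorem apply_eq_zero_of_norm_le_norm_sub (hP : IsLProjection P) {z : Z}
    (hz : ‖z‖ ≤ ‖z - P z‖) : P z = 0 :=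
  (inseparable_zero_iff_norm.mpr (by linarith [hP.2 z, norm_nonneg (P z)])).eq

theorem eq_of_sub_mem_range (hP : IsLProjection P) {y z : Z} (hy : P y = 0)
    (hzy : z - y ∈ Set.range P) (hz : ‖z‖ ≤ ‖y‖) : z = y := by
  have hPz : P z = z - y := by
    rw [← hP.apply_of_mem_range hzy, map_sub, hy, sub_zero]
  have hsplit := hP.2 z
  rw [hPz, sub_sub_cancel] at hsplit
  exact sub_eq_zero.mp (inseparable_zero_iff_norm.mpr (by linarith [norm_nonneg (z - y)])).eq

end IsLProjection

section Transpose

variable {E F : Type*} [SeminormedAddCommGroup E] [NormedSpace ℂ E]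
  [SeminormedAddCommGroup F] [NormedSpace ℂ F]

theorem ctranspose_apply (f : E →L[ℂ] F) (g : StrongDual ℂ F) (x : E) :
    ctranspose f g x = g (f x) :=
  rfl

theorem norm_ctranspose_le (f : E →L[ℂ] F) (g : StrongDual ℂ F) :
    ‖ctranspose f g‖ ≤ ‖g‖ * ‖f‖ :=
  g.opNorm_comp_le f

theorem ctranspose_inclusionInDoubleDual_apply (f : StrongDual ℂ E) :
    ctranspose (inclusionInDoubleDual ℂ E) (inclusionInDoubleDual ℂ (StrongDual ℂ E) f) = f :=
  rfl

theorem ctranspose_inclusionInDoubleDual_eq_zero_iff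
    (φ : StrongDual ℂ (StrongDual ℂ (StrongDual ℂ E))) :
    ctranspose (inclusionInDoubleDual ℂ E) φ = 0 ↔ ∀ x : E, φ (inclusionInDoubleDual ℂ E x) = 0 :=
  ContinuousLinearMap.ext_iff

theorem eq_id_of_ctranspose_apply_inclusionInDoubleDual
    (S : StrongDual ℂ F →L[ℂ] StrongDual ℂ F)
    (hS : ∀ g : F, ctranspose S (inclusionInDoubleDual ℂ F g) = inclusionInDoubleDual ℂ F g) :
    S = ContinuousLinearMap.id ℂ (StrongDual ℂ F) := by
  ext ξ g
  exact congrArg (· ξ) (hS g)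

end Transpose

namespace IsLProjection

variable {X : Type*} [SeminormedAddCommGroup X] [NormedSpace ℂ X]
  {P : StrongDual ℂ (StrongDual ℂ (StrongDual ℂ X)) →L[ℂ]
    StrongDual ℂ (StrongDual ℂ (StrongDual ℂ X))}

theorem apply_inclusionInDoubleDual_eq_zero
    (hP : IsLProjection (Z := StrongDual ℂ (StrongDual ℂ (StrongDual ℂ X))) P)
    (hrange : Set.range P = {φ | ∀ x : X, φ (inclusionInDoubleDual ℂ X x) = 0})
    (f : StrongDual ℂ X) : P (inclusionInDoubleDual ℂ (StrongDual ℂ X) f) = 0 := by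
  set y := inclusionInDoubleDual ℂ (StrongDual ℂ X) f
  have hPy : ctranspose (inclusionInDoubleDual ℂ X) (P y) = 0 := by
    have hmem : P y ∈ Set.range P := Set.mem_range_self y
    rw [hrange] at hmem
    exact (ctranspose_inclusionInDoubleDual_eq_zero_iff _).mpr hmem
  refine hP.apply_eq_zero_of_norm_le_norm_sub ?_
  calc ‖y‖ ≤ ‖f‖ := double_dual_bound ℂ _ f
    _ = ‖ctranspose (inclusionInDoubleDual ℂ X) (y - P y)‖ := by
      rw [map_sub, hPy, sub_zero, ctranspose_inclusionInDoubleDual_apply]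
    _ ≤ ‖y - P y‖ * ‖inclusionInDoubleDual ℂ X‖ := norm_ctranspose_le _ _
    _ ≤ ‖y - P y‖ := mul_le_of_le_one_right (norm_nonneg _) (inclusionInDoubleDual_norm_le ℂ X)

theorem ctranspose_apply_inclusionInDoubleDual
    (hP : IsLProjection (Z := StrongDual ℂ (StrongDual ℂ (StrongDual ℂ X))) P)
    (hrange : Set.range P = {φ | ∀ x : X, φ (inclusionInDoubleDual ℂ X x) = 0})
    {T : StrongDual ℂ (StrongDual ℂ X) →L[ℂ] StrongDual ℂ (StrongDual ℂ X)} (hT : ‖T‖ ≤ 1)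
    (hTfix : ∀ x : X, T (inclusionInDoubleDual ℂ X x) = inclusionInDoubleDual ℂ X x)
    (f : StrongDual ℂ X) :
    ctranspose T (inclusionInDoubleDual ℂ (StrongDual ℂ X) f) =
      inclusionInDoubleDual ℂ (StrongDual ℂ X) f := by
  set y := inclusionInDoubleDual ℂ (StrongDual ℂ X) f
  refine hP.eq_of_sub_mem_range (hP.apply_inclusionInDoubleDual_eq_zero hrange f) ?_ ?_
  · rw [hrange]
    intro x
    rw [sub_apply, ctranspose_apply, hTfix x, sub_self]
  · calc ‖ctranspose T y‖ ≤ ‖y‖ * ‖T‖ := norm_ctranspose_le T y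
      _ ≤ ‖y‖ := mul_le_of_le_one_right (norm_nonneg _) hT

end IsLProjection

theorem MEmbedded.unique_extension_property_general
    (X : Type*) [NormedAddCommGroup X] [NormedSpace ℂ X]
    (hX : MEmbedded X) :
    ∀ T : StrongDual ℂ (StrongDual ℂ X) →L[ℂ] StrongDual ℂ (StrongDual ℂ X), ‖T‖ ≤ 1 →
      (∀ x : X, T (inclusionInDoubleDual ℂ X x) = inclusionInDoubleDual ℂ X x) →
      T = ContinuousLinearMap.id ℂ (StrongDual ℂ (StrongDual ℂ X)) := by
  obtain ⟨P, hP, hrange⟩ := hX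
  intro T hT hTfix
  exact eq_id_of_ctranspose_apply_inclusionInDoubleDual T
    (hP.ctranspose_apply_inclusionInDoubleDual hrange hT hTfix)

/-- Every M-embedded complex Banach space has the unique extension property:
the only contractive linear operator on `X**` restricting to the identity on `i_X(X)` is the
identity operator. -/
theorem MEmbedded.unique_extension_property
    (X : Type*) [NormedAddCommGroup X] [NormedSpace ℂ X] [CompleteSpace X]
    (hX : MEmbedded X) :
    ∀ T : StrongDual ℂ (StrongDual ℂ X) →L[ℂ] StrongDual ℂ (StrongDual ℂ X), ‖T‖ ≤ 1 →
      (∀ x : X, T (inclusionInDoubleDual ℂ X x) = inclusionInDoubleDual ℂ X x) →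
      T = ContinuousLinearMap.id ℂ (StrongDual ℂ (StrongDual ℂ X)) :=
  MEmbedded.unique_extension_property_general X hX
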